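/- For every ε > 0 there exists K such that for all nonnegative integers m, n with m + n > K, |log B(m,n)/(m+n) + H(m/(m+n))| < ε, where H(x) = -x log x - (1-x) log(1-x) (with H(0)=H(1)=0) and B(m,n) = ((m+n+1) * choose(m+n,m))^{-1}. -/

import Mathlib

/-- Shifted-argument Beta function: `B(m,n) = ((m+n+1) * choose(m+n,m))⁻¹`. -/
noncomputable def Bfun (m n : ℕ) : ℝ :=
  (((m + n + 1 : ℕ) : ℝ) * ((Nat.choose (m + n) m : ℕ) : ℝ))⁻¹

/-- Shannon entropy (with `Real.log 0 = 0`, so `H 0 = H 1 = 0`). -/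
noncomputable def shannonH (x : ℝ) : ℝ := -x * Real.log x - (1 - x) * Real.log (1 - x)

lemma step_up (m n k : ℕ) (hk : k < m) :
    m ^ k * n ^ (m + n - k) * Nat.choose (m + n) k ≤
      m ^ (k + 1) * n ^ (m + n - (k + 1)) * Nat.choose (m + n) (k + 1) := by
  set e := m + n - (k + 1) with he0
  have he : m + n - k = e + 1 := by omega
  have key2 : n * (k + 1) ≤ (m + n - k) * m :=
    calc n * (k + 1) ≤ n * m := Nat.mul_le_mul_left n hk
      _ ≤ (m + n - k) * m := Nat.mul_le_mul_right m (by omega)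
  have key : n * Nat.choose (m + n) k ≤ m * Nat.choose (m + n) (k + 1) := by
    apply Nat.le_of_mul_le_mul_right _ (Nat.succ_pos k)
    calc n * Nat.choose (m + n) k * (k + 1)
        = (n * (k + 1)) * Nat.choose (m + n) k := by ring
      _ ≤ ((m + n - k) * m) * Nat.choose (m + n) k := Nat.mul_le_mul_right _ key2
      _ = m * (Nat.choose (m + n) k * (m + n - k)) := by ring
      _ = m * (Nat.choose (m + n) (k + 1) * (k + 1)) := by
          rw [Nat.choose_succ_right_eq]
      _ = m * Nat.choose (m + n) (k + 1) * (k + 1) := by ring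
  rw [he, pow_succ, pow_succ]
  calc m ^ k * (n ^ e * n) * Nat.choose (m + n) k
      = (m ^ k * n ^ e) * (n * Nat.choose (m + n) k) := by ring
    _ ≤ (m ^ k * n ^ e) * (m * Nat.choose (m + n) (k + 1)) := Nat.mul_le_mul_left _ key
    _ = m ^ k * m * n ^ e * Nat.choose (m + n) (k + 1) := by ring

lemma step_down (m n k : ℕ) (hm : m ≤ k) (hk : k < m + n) :
    m ^ (k + 1) * n ^ (m + n - (k + 1)) * Nat.choose (m + n) (k + 1) ≤
      m ^ k * n ^ (m + n - k) * Nat.choose (m + n) k := by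
  set e := m + n - (k + 1) with he0
  have he : m + n - k = e + 1 := by omega
  have key2 : m * (m + n - k) ≤ n * (k + 1) :=
    calc m * (m + n - k) ≤ m * n := Nat.mul_le_mul_left m (by omega)
      _ ≤ (k + 1) * n := Nat.mul_le_mul_right n (by omega)
      _ = n * (k + 1) := by ring
  have key : m * Nat.choose (m + n) (k + 1) ≤ n * Nat.choose (m + n) k := by
    apply Nat.le_of_mul_le_mul_right _ (Nat.succ_pos k)
    calc m * Nat.choose (m + n) (k + 1) * (k + 1)
        = m * (Nat.choose (m + n) (k + 1) * (k + 1)) := by ring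
      _ = m * (Nat.choose (m + n) k * (m + n - k)) := by rw [Nat.choose_succ_right_eq]
      _ = (m * (m + n - k)) * Nat.choose (m + n) k := by ring
      _ ≤ (n * (k + 1)) * Nat.choose (m + n) k := Nat.mul_le_mul_right _ key2
      _ = n * Nat.choose (m + n) k * (k + 1) := by ring
  rw [he, pow_succ, pow_succ]
  calc m ^ k * m * n ^ e * Nat.choose (m + n) (k + 1)
      = (m ^ k * n ^ e) * (m * Nat.choose (m + n) (k + 1)) := by ring
    _ ≤ (m ^ k * n ^ e) * (n * Nat.choose (m + n) k) := Nat.mul_le_mul_left _ key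
    _ = m ^ k * (n ^ e * n) * Nat.choose (m + n) k := by ring

lemma tmax (m n : ℕ) : ∀ k ≤ m + n,
    m ^ k * n ^ (m + n - k) * Nat.choose (m + n) k ≤
      m ^ m * n ^ n * Nat.choose (m + n) m := by
  have hmm : m ^ m * n ^ (m + n - m) * Nat.choose (m + n) m
      = m ^ m * n ^ n * Nat.choose (m + n) m := by
    rw [Nat.add_sub_cancel_left]
  have up : ∀ d k, k + d = m →
      m ^ k * n ^ (m + n - k) * Nat.choose (m + n) k ≤
        m ^ m * n ^ n * Nat.choose (m + n) m := by
    intro d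
    induction d with
    | zero => intro k h; rw [show k = m by omega, hmm]
    | succ d ih =>
        intro k h
        exact (step_up m n k (by omega)).trans (ih (k + 1) (by omega))
  have down : ∀ d, m + d ≤ m + n →
      m ^ (m + d) * n ^ (m + n - (m + d)) * Nat.choose (m + n) (m + d) ≤
        m ^ m * n ^ n * Nat.choose (m + n) m := by
    intro d
    induction d with
    | zero => intro _; rw [Nat.add_zero, hmm]
    | succ d ih =>
        intro h
        have h2 := step_down m n (m + d) (by omega) (by omega)
        exact h2.trans (ih (by omega))
  intro k hk
  rcases le_or_gt k m with h | h
  · exact up (m - k) k (by omega)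
  · have := down (k - m) (by omega)
    rwa [show m + (k - m) = k by omega] at this

lemma nat_bounds (m n : ℕ) :
    m ^ m * n ^ n * Nat.choose (m + n) m ≤ (m + n) ^ (m + n) ∧
    (m + n) ^ (m + n) ≤ (m + n + 1) * (m ^ m * n ^ n * Nat.choose (m + n) m) := by
  have hadd : (m + n) ^ (m + n)
      = ∑ k ∈ Finset.range (m + n + 1), m ^ k * n ^ (m + n - k) * Nat.choose (m + n) k := by
    simpa using add_pow m n (m + n)
  constructor
  · rw [hadd]
    have := Finset.single_le_sum
      (f := fun k => m ^ k * n ^ (m + n - k) * Nat.choose (m + n) k)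
      (fun i _ => Nat.zero_le _) (Finset.mem_range.mpr (by omega : m < m + n + 1))
    simpa [Nat.add_sub_cancel_left] using this
  · rw [hadd]
    have := Finset.sum_le_card_nsmul (Finset.range (m + n + 1))
      (fun k => m ^ k * n ^ (m + n - k) * Nat.choose (m + n) k)
      (m ^ m * n ^ n * Nat.choose (m + n) m)
      (fun k hk => tmax m n k (by simpa using Nat.lt_succ_iff.mp (Finset.mem_range.mp hk)))
    simpa [smul_eq_mul] using this

lemma mul_log_div (m N : ℕ) (hN : 0 < N) :
    ((m : ℝ) / N) * Real.log ((m : ℝ) / N)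
      = ((m : ℝ) * Real.log m - m * Real.log N) / N := by
  rcases Nat.eq_zero_or_pos m with hm | hm
  · simp [hm]
  · have hm' : (m : ℝ) ≠ 0 := Nat.cast_ne_zero.mpr (by omega)
    have hN' : (N : ℝ) ≠ 0 := Nat.cast_ne_zero.mpr (by omega)
    rw [Real.log_div hm' hN']
    field_simp

theorem stmt2 :
    ∀ ε > (0 : ℝ), ∃ K : ℕ, ∀ m n : ℕ, m + n > K →
      |Real.log (Bfun m n) / ((m + n : ℕ) : ℝ) +
        shannonH (((m : ℕ) : ℝ) / (((m + n : ℕ) : ℝ)))| < ε := by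
  intro ε hε
  have hf : Filter.Tendsto (fun x : ℝ => Real.log x ^ 1 / (1 * x + (-1)))
      Filter.atTop (nhds 0) := Real.tendsto_pow_log_div_mul_add_atTop 1 (-1) 1 one_ne_zero
  have hg : Filter.Tendsto (fun N : ℕ => Real.log ((N : ℝ) + 1) / (N : ℝ))
      Filter.atTop (nhds 0) := by
    have h2 := hf.comp (tendsto_natCast_atTop_atTop.comp (Filter.tendsto_add_atTop_nat 1))
    refine h2.congr fun N => ?_
    simp only [Function.comp_apply]
    push_cast
    rw [pow_one]
    ring
  obtain ⟨K, hK⟩ := Filter.eventually_atTop.mp (hg.eventually (gt_mem_nhds hε))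
  refine ⟨K, ?_⟩
  intro m n hmn
  have hN0 : 0 < m + n := by omega
  set N := m + n with hNdef
  have hC : 0 < Nat.choose N m := Nat.choose_pos (by omega)
  set C := Nat.choose N m with hCdef
  have hNr : (0 : ℝ) < N := by exact_mod_cast hN0
  obtain ⟨hup, hlow⟩ := nat_bounds m n
  set x : ℝ := ((m ^ m * n ^ n * C : ℕ) : ℝ) / ((N ^ N : ℕ) : ℝ) with hxdef
  have hmp : 0 < m ^ m := by
    rcases Nat.eq_zero_or_pos m with h | h
    · simp [h]
    · positivity
  have hnp : 0 < n ^ n := by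
    rcases Nat.eq_zero_or_pos n with h | h
    · simp [h]
    · positivity
  have hApos : (0 : ℝ) < ((m ^ m * n ^ n * C : ℕ) : ℝ) := by
    have : 0 < m ^ m * n ^ n * C := Nat.mul_pos (Nat.mul_pos hmp hnp) hC
    exact_mod_cast this
  have hBpos : (0 : ℝ) < ((N ^ N : ℕ) : ℝ) := by
    have : 0 < N ^ N := pow_pos hN0 N
    exact_mod_cast this
  have hxpos : 0 < x := div_pos hApos hBpos
  have hx1 : x ≤ 1 := by
    rw [hxdef, div_le_one hBpos]
    exact_mod_cast hup
  have hx2 : 1 / ((N : ℝ) + 1) ≤ x := by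
    rw [hxdef, div_le_div_iff₀ (by positivity) hBpos, one_mul]
    calc ((N ^ N : ℕ) : ℝ) ≤ (((N + 1) * (m ^ m * n ^ n * C) : ℕ) : ℝ) := by exact_mod_cast hlow
      _ = ((m ^ m * n ^ n * C : ℕ) : ℝ) * ((N : ℝ) + 1) := by push_cast; ring
  have hlog1 : Real.log x ≤ 0 := Real.log_nonpos hxpos.le hx1
  have hlog2 : -Real.log ((N : ℝ) + 1) ≤ Real.log x := by
    have := Real.log_le_log (by positivity) hx2
    rwa [one_div, Real.log_inv] at this
  have hlogN1 : 0 ≤ Real.log ((N : ℝ) + 1) := Real.log_nonneg (by linarith)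
  have hmne : (↑(m ^ m) : ℝ) ≠ 0 := by exact_mod_cast hmp.ne'
  have hnne : (↑(n ^ n) : ℝ) ≠ 0 := by exact_mod_cast hnp.ne'
  have hCne : (↑C : ℝ) ≠ 0 := Nat.cast_ne_zero.mpr hC.ne'
  have hNNne : (↑(N ^ N) : ℝ) ≠ 0 := hBpos.ne'
  have hlogx_eq : Real.log x
      = Real.log C + ((m : ℝ) * Real.log m + (n : ℝ) * Real.log n) - (N : ℝ) * Real.log N := by
    rw [hxdef, show ((m ^ m * n ^ n * C : ℕ) : ℝ) = (↑(m ^ m) * ↑(n ^ n) * ↑C : ℝ) by push_cast; ring,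
      Real.log_div (by exact mul_ne_zero (mul_ne_zero hmne hnne) hCne) hNNne,
      Real.log_mul (mul_ne_zero hmne hnne) hCne, Real.log_mul hmne hnne]
    push_cast
    rw [Real.log_pow, Real.log_pow, Real.log_pow]
    push_cast
    ring
  have hB : Real.log (Bfun m n) = -(Real.log ((N : ℝ) + 1) + Real.log (C : ℝ)) := by
    rw [Bfun, ← hNdef, ← hCdef, Real.log_inv, Real.log_mul (by push_cast; positivity) hCne]
    push_cast
    ring
  have hsum : ((n : ℝ)) = (N : ℝ) - m := by
    rw [hNdef]; push_cast; ring
  have h1m : (1 : ℝ) - (m : ℝ) / N = (n : ℝ) / N := by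
    rw [hsum]
    field_simp
  have hH : shannonH ((m : ℝ) / N)
      = -(((m : ℝ) * Real.log m - m * Real.log N) / N)
        - (((n : ℝ) * Real.log n - n * Real.log N) / N) := by
    rw [shannonH, h1m, neg_mul, ← mul_log_div m N hN0, ← mul_log_div n N hN0]
  have hmn' : (m : ℝ) + n = (N : ℝ) := by rw [hNdef]; push_cast; ring
  have num : -(Real.log ((N : ℝ) + 1) + Real.log (C : ℝ))
      + (-(((m : ℝ) * Real.log m - m * Real.log N))
        - (((n : ℝ) * Real.log n - n * Real.log N)))
      = -(Real.log ((N : ℝ) + 1) + Real.log x) := by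
    rw [hlogx_eq]
    linear_combination (Real.log (N : ℝ)) * hmn'
  have key : Real.log (Bfun m n) / (N : ℝ) + shannonH ((m : ℝ) / N)
      = -((Real.log ((N : ℝ) + 1) + Real.log x) / N) := by
    rw [hB, hH, show -((Real.log ((N : ℝ) + 1) + Real.log x) / (N : ℝ))
      = (-(Real.log ((N : ℝ) + 1) + Real.log x)) / N by ring, ← num]
    ring
  rw [key, abs_neg, abs_div, abs_of_pos hNr]
  have habs : |Real.log ((N : ℝ) + 1) + Real.log x| ≤ Real.log ((N : ℝ) + 1) :=
    abs_le.mpr ⟨by linarith, by linarith⟩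
  calc |Real.log ((N : ℝ) + 1) + Real.log x| / (N : ℝ)
      ≤ Real.log ((N : ℝ) + 1) / (N : ℝ) := by gcongr
    _ < ε := hK N (by omega)
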